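/- arXiv:1404.4055 — 2 statements merged into one kernel-verified Lean document; each statement's English description precedes it below -/
import Mathlib

section
/- For a trapezoid with parallel sides of lengths s and s' (s > s' > 0) and equal slant legs of length a with 2a > s − s', the distance from the circumcenter to the side of length s is m = (2a² − s(s − s'))/(2√(4a² − (s−s')²)), the distance to the side of length s' is m' = (2a² + s'(s − s'))/(2√(4a² − (s−s')²)), and the distance to each leg is mₐ = a(s + s')/(2√(4a² − (s−s')²)). -/
/-- For an isosceles trapezoid with parallel sides `s > s' > 0`, legs `a` with `2a > s - s'`,
vertices `(±s/2, 0)`, `(±s'/2, h)` with height `h = √(a² - ((s-s')/2)²)`, the circumcenter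
`(0, y)` (equidistant from the vertices) satisfies: its distance `y` to the side of length `s`
is `(2a² - s(s-s'))/(2√(4a² - (s-s')²))`, its distance `h - y` to the side of length `s'` is
`(2a² + s'(s-s'))/(2√(4a² - (s-s')²))`, and its distance to each leg is
`a(s+s')/(2√(4a² - (s-s')²))`. -/
theorem trapezoid_circumcenter_distances (s s' a h y : ℝ)
    (hs' : 0 < s') (hss : s' < s) (hleg : s - s' < 2 * a) (ha : 0 < a)
    (hh : h = Real.sqrt (a ^ 2 - ((s - s') / 2) ^ 2))
    (hcirc : (s / 2) ^ 2 + y ^ 2 = (s' / 2) ^ 2 + (h - y) ^ 2) :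
    y = (2 * a ^ 2 - s * (s - s')) / (2 * Real.sqrt (4 * a ^ 2 - (s - s') ^ 2)) ∧
    h - y = (2 * a ^ 2 + s' * (s - s')) / (2 * Real.sqrt (4 * a ^ 2 - (s - s') ^ 2)) ∧
    (((s' - s) / 2) * y + h * s / 2) / a
      = a * (s + s') / (2 * Real.sqrt (4 * a ^ 2 - (s - s') ^ 2)) := by
  have hk : (0:ℝ) < a ^ 2 - ((s - s') / 2) ^ 2 := by nlinarith
  have hpos : 0 < h := by rw [hh]; exact Real.sqrt_pos.mpr hk
  have hsq : h ^ 2 = a ^ 2 - ((s - s') / 2) ^ 2 := by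
    rw [hh, Real.sq_sqrt hk.le]
  have hroot : Real.sqrt (4 * a ^ 2 - (s - s') ^ 2) = 2 * h := by
    rw [show 4 * a ^ 2 - (s - s') ^ 2 = (2*h)^2 by nlinarith]
    exact Real.sqrt_sq (by linarith)
  rw [hroot]
  have hne : h ≠ 0 := hpos.ne'
  have hane : a ≠ 0 := ha.ne'
  refine ⟨?_, ?_, ?_⟩ <;> field_simp <;> nlinarith [hcirc, hsq, sq_nonneg (h - y)]
end

section
/- Let ρ: ℝ → ℝ be twice continuously differentiable and a > 0. Then as a → 0, the expression (4(ρ(x−a) − 2ρ(x) + ρ(x+a))(ρ(x−a) + 14ρ(x) + 9ρ(x+a))) / (3a²(ρ(x) + ρ(x+a))(ρ(x−a) + 6ρ(x) + ρ(x+a))) converges to 2ρ''(x)/ρ(x), provided ρ(x) > 0. -/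
open Filter

/-- For `ρ : ℝ → ℝ` twice continuously differentiable with `ρ x > 0`, the zeroth-order
simplicial Ricci flow axial expression converges, as the mesh spacing `a → 0⁺`, to the
continuum Ricci flow right-hand side `2 ρ''(x) / ρ(x)`. -/
theorem srf_axial_continuum_limit (ρ : ℝ → ℝ) (x : ℝ)
    (hρ : ContDiff ℝ 2 ρ) (hx : 0 < ρ x) :
    Tendsto (fun a : ℝ =>
        (4 * (ρ (x - a) - 2 * ρ x + ρ (x + a)) * (ρ (x - a) + 14 * ρ x + 9 * ρ (x + a)))
          / (3 * a ^ 2 * (ρ x + ρ (x + a)) * (ρ (x - a) + 6 * ρ x + ρ (x + a))))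
      (nhdsWithin 0 (Set.Ioi 0)) (nhds (2 * deriv (deriv ρ) x / ρ x)) := by
  have hρ1 : Differentiable ℝ ρ := hρ.differentiable (by norm_num)
  set D := deriv ρ with hDdef
  have hD1 : ContDiff ℝ 1 D := by
    have := (contDiff_succ_iff_deriv (n := 1)).mp (by norm_num at hρ ⊢; exact hρ)
    exact this.2.2
  have hDc : Continuous D := hD1.continuous
  have hD : DifferentiableAt ℝ D x := (hD1.differentiable (by norm_num)) x
  set d := deriv D x with hddef
  have hρc : Continuous ρ := hρ.continuous
  -- limits of ρ (x + a) and ρ (x - a) as a → 0⁺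
  have hplus : Tendsto (fun a : ℝ => ρ (x + a)) (nhdsWithin 0 (Set.Ioi 0)) (nhds (ρ x)) := by
    have : Tendsto (fun a : ℝ => ρ (x + a)) (nhds 0) (nhds (ρ x)) := by
      have hcont : Continuous fun a : ℝ => ρ (x + a) :=
        by fun_prop
      have := hcont.tendsto 0
      simpa using this
    exact this.mono_left nhdsWithin_le_nhds
  have hminus : Tendsto (fun a : ℝ => ρ (x - a)) (nhdsWithin 0 (Set.Ioi 0)) (nhds (ρ x)) := by
    have : Tendsto (fun a : ℝ => ρ (x - a)) (nhds 0) (nhds (ρ x)) := by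
      have hcont : Continuous fun a : ℝ => ρ (x - a) :=
        by fun_prop
      have := hcont.tendsto 0
      simpa using this
    exact this.mono_left nhdsWithin_le_nhds
  -- symmetric derivative limit for D
  have hslope : Tendsto (slope D x) (nhdsWithin x {x}ᶜ) (nhds d) :=
    hasDerivAt_iff_tendsto_slope.mp hD.hasDerivAt
  have hm1 : Tendsto (fun a : ℝ => x + a) (nhdsWithin 0 (Set.Ioi 0)) (nhdsWithin x {x}ᶜ) := by
    apply tendsto_nhdsWithin_of_tendsto_nhds_of_eventually_within
    · have hcont : Continuous fun a : ℝ => x + a := by fun_prop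
      have : Tendsto (fun a : ℝ => x + a) (nhds 0) (nhds x) := by
        simpa using hcont.tendsto 0
      exact this.mono_left nhdsWithin_le_nhds
    · filter_upwards [self_mem_nhdsWithin] with a (ha : (0:ℝ) < a)
      simp only [Set.mem_compl_iff, Set.mem_singleton_iff]
      intro h
      linarith
  have hm2 : Tendsto (fun a : ℝ => x - a) (nhdsWithin 0 (Set.Ioi 0)) (nhdsWithin x {x}ᶜ) := by
    apply tendsto_nhdsWithin_of_tendsto_nhds_of_eventually_within
    · have hcont : Continuous fun a : ℝ => x - a := by fun_prop
      have : Tendsto (fun a : ℝ => x - a) (nhds 0) (nhds x) := by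
        simpa using hcont.tendsto 0
      exact this.mono_left nhdsWithin_le_nhds
    · filter_upwards [self_mem_nhdsWithin] with a (ha : (0:ℝ) < a)
      simp only [Set.mem_compl_iff, Set.mem_singleton_iff]
      intro h
      linarith
  have h1 : Tendsto (fun a : ℝ => (D (x + a) - D x) / a)
      (nhdsWithin 0 (Set.Ioi 0)) (nhds d) := by
    have := hslope.comp hm1
    refine this.congr fun a => ?_
    simp only [Function.comp_apply, slope_def_field, add_sub_cancel_left]
  have h2 : Tendsto (fun a : ℝ => (D x - D (x - a)) / a)
      (nhdsWithin 0 (Set.Ioi 0)) (nhds d) := by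
    have := hslope.comp hm2
    refine this.congr fun a => ?_
    simp only [Function.comp_apply, slope_def_field]
    rw [show x - a - x = -a by ring, div_neg, ← neg_div, neg_sub]
  have hdiv : Tendsto (fun a : ℝ => (D (x + a) - D (x - a)) / (2 * a))
      (nhdsWithin 0 (Set.Ioi 0)) (nhds d) := by
    have h3 := (h1.add h2).div_const 2
    have hval : (d + d) / 2 = d := by ring
    rw [hval] at h3
    refine h3.congr fun a => ?_
    rw [← add_div, div_div]
    congr 1
    · ring
    · ring
  -- the second difference quotient via L'Hôpital
  have hS : Tendsto (fun a : ℝ => (ρ (x - a) - 2 * ρ x + ρ (x + a)) / a ^ 2)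
      (nhdsWithin 0 (Set.Ioi 0)) (nhds d) := by
    apply HasDerivAt.lhopital_zero_nhdsGT
      (f' := fun a => D (x + a) - D (x - a)) (g' := fun a => 2 * a)
    · filter_upwards with a
      have hp : HasDerivAt (fun a : ℝ => ρ (x + a)) (D (x + a) * 1) a :=
        (hρ1 (x + a)).hasDerivAt.comp a ((hasDerivAt_id a).const_add x)
      have hq : HasDerivAt (fun a : ℝ => ρ (x - a)) (D (x - a) * (-1)) a :=
        (hρ1 (x - a)).hasDerivAt.comp a ((hasDerivAt_id a).const_sub x)
      have := (hq.sub_const (2 * ρ x)).add hp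
      exact this.congr_deriv (by ring)
    · filter_upwards with a
      have := hasDerivAt_pow 2 a
      exact this.congr_deriv (by norm_num)
    · filter_upwards [self_mem_nhdsWithin] with a (ha : (0:ℝ) < a)
      positivity
    · have : Tendsto (fun a : ℝ => ρ (x - a) - 2 * ρ x + ρ (x + a))
          (nhdsWithin 0 (Set.Ioi 0)) (nhds (ρ x - 2 * ρ x + ρ x)) :=
        (hminus.sub tendsto_const_nhds).add hplus
      have h0 : ρ x - 2 * ρ x + ρ x = 0 := by ring
      rw [h0] at this
      exact this
    · have : Tendsto (fun a : ℝ => a ^ 2) (nhds (0:ℝ)) (nhds ((0:ℝ) ^ 2)) :=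
        (continuous_pow 2).tendsto 0
      simpa using this.mono_left nhdsWithin_le_nhds
    · exact hdiv
  -- the rational factor
  have hR : Tendsto (fun a : ℝ =>
      (4 * (ρ (x - a) + 14 * ρ x + 9 * ρ (x + a)))
        / (3 * (ρ x + ρ (x + a)) * (ρ (x - a) + 6 * ρ x + ρ (x + a))))
      (nhdsWithin 0 (Set.Ioi 0)) (nhds (2 / ρ x)) := by
    have hnum : Tendsto (fun a : ℝ => 4 * (ρ (x - a) + 14 * ρ x + 9 * ρ (x + a)))
        (nhdsWithin 0 (Set.Ioi 0)) (nhds (4 * (ρ x + 14 * ρ x + 9 * ρ x))) :=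
      (((hminus.add tendsto_const_nhds).add (hplus.const_mul 9)).const_mul 4)
    have hden : Tendsto (fun a : ℝ =>
        3 * (ρ x + ρ (x + a)) * (ρ (x - a) + 6 * ρ x + ρ (x + a)))
        (nhdsWithin 0 (Set.Ioi 0))
        (nhds (3 * (ρ x + ρ x) * (ρ x + 6 * ρ x + ρ x))) :=
      ((tendsto_const_nhds.add hplus).const_mul 3).mul
        ((hminus.add tendsto_const_nhds).add hplus)
    have hden0 : 3 * (ρ x + ρ x) * (ρ x + 6 * ρ x + ρ x) ≠ 0 := by positivity
    have := hnum.div hden hden0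
    convert this using 2
    · rfl
    field_simp
    ring
  have hfinal := hS.mul hR
  have hval : d * (2 / ρ x) = 2 * d / ρ x := by ring
  rw [hval] at hfinal
  refine hfinal.congr fun a => ?_
  rw [div_mul_div_comm]
  congr 1 <;> ring
end
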